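/- arXiv:2205.10050 — 2 statements merged into one kernel-verified Lean document; each statement's English description precedes it below -/
import Mathlib

section
/- With the construction of §2 (all M_j ≥ 2, sufficiently large initial terms), the vector x = (ξ₁,…,ξₙ) with ξ_j = Σ_{h≥0} 1/a_{nh+j} satisfies ψ*_x(Q) ≤ c(1 + o(1)) Q^{−n} as Q → ∞; consequently Θ*(x) ≤ c. -/
open Filter Finset

/-- Linear form approximation function: minimum of |b₀ + Σ bⱼξⱼ| over nonzero
integer vectors with `max_{1≤i≤n} |b_i| ≤ Q`. -/
noncomputable def psiStar {n : ℕ} (x : Fin n → ℝ) (Q : ℕ) : ℝ :=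
  sInf {r : ℝ | ∃ b : Fin (n + 1) → ℤ, b ≠ 0 ∧ (∀ i : Fin n, |b i.succ| ≤ (Q : ℤ)) ∧
    r = |(b 0 : ℝ) + ∑ i : Fin n, (b i.succ : ℝ) * x i|}

/-- Dirichlet constant `Θ*(x) = limsup_{Q→∞} Qⁿ ψ*_x(Q)`. -/
noncomputable def thetaStar {n : ℕ} (x : Fin n → ℝ) : ℝ :=
  Filter.limsup (fun Q : ℕ => (Q : ℝ) ^ n * psiStar x Q) Filter.atTop

/-- The recursive sequence of the construction of §2:
`a_j = 8·j!` for `1 ≤ j ≤ n`, `a_{nk+1} = a_{nk}^{M_k}`,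
`a_{nk+j} = a_{nk+1}^j` for `2 ≤ j ≤ n-1`, and
`a_{nk+n} = ⌈c⁻¹ a_{nk+1}⌉ · a_{nk+n-1}`; with the convention `a_0 = 1`. -/
def IsConstrSeq (n : ℕ) (c : ℝ) (M : ℕ → ℕ) (a : ℕ → ℕ) : Prop :=
  a 0 = 1 ∧
  (∀ j, 1 ≤ j → j ≤ n → a j = 8 * Nat.factorial j) ∧
  (∀ k, 1 ≤ k → a (n * k + 1) = a (n * k) ^ M k) ∧
  (∀ k, 1 ≤ k → ∀ j, 2 ≤ j → j ≤ n - 1 → a (n * k + j) = a (n * k + 1) ^ j) ∧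
  (∀ k, 1 ≤ k → a (n * k + n) = ⌈c⁻¹ * (a (n * k + 1) : ℝ)⌉₊ * a (n * k + n - 1))

/-- `ξ_j = Σ_{h≥0} 1/a_{nh+j}`. -/
noncomputable def xiCoord (a : ℕ → ℕ) (n j : ℕ) : ℝ := ∑' h : ℕ, (1 : ℝ) / (a (n * h + j))

/-- The vector `x = (ξ₁,…,ξₙ)` of the construction. -/
noncomputable def xVec (a : ℕ → ℕ) (n : ℕ) : Fin n → ℝ := fun j => xiCoord a n (j.val + 1)

/-- The rational partial sum `S_{j,k} = Σ_{h=0}^{k} 1/a_{nh+j}`. -/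
def Spartial (a : ℕ → ℕ) (n j k : ℕ) : ℚ := ∑ h ∈ Finset.range (k + 1), (1 : ℚ) / (a (n * h + j))

/-!
Write `A_k = a_{nk+1}` and `B_k = a_{nk+n}`. Each term of the sequence is a multiple, at least
twice, of the previous one, so `a_{nk+j} ξ_j` lies within `2 a_{nk+j} / a_{n(k+1)+j}` above an
integer, and the rule for `B_k` gives `A_k^n ≤ c B_k`; the exponents `M_k ≥ n + 2` give
`A_{k+1} ≥ B_k^{n+2}`. For `A_k ≤ Q < A_{k+1}` there are three regimes:
* `Q ≤ B_k`: approximate `ξ_1` with denominator `A_k`;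
* `B_k ≤ Q ≤ √A_{k+1}`: approximate `ξ_n` with denominator `B_k`, using `A_{k+1}^n ≤ c B_{k+1}`;
* `√A_{k+1} ≤ Q < A_{k+1}`: with `E = A_{k+1} / B_k`, the number `E ξ_1` is `1 / B_k` modulo an
  integer and a small tail. If `ξ_n ≈ P / B_k`, Dirichlet's theorem for `P / B_k` with bound
  `≈ A_{k+1} / Q` gives `r ≤ Q` and `s ≡ r P (mod B_k)` with `|E s| ≤ Q`, and then
  `s E ξ_1 - r ξ_n` is `-r / B_{k+1}` modulo an integer and the tails, where
  `r Q^n < A_{k+1}^n ≤ c B_{k+1}`. The tails add `4 / A_{k+1}` to `Q^n ψ*(Q)`.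
-/

section PsiStar

variable {n : ℕ} (x : Fin n → ℝ) (Q : ℕ)

lemma psiStar_nonneg : 0 ≤ psiStar x Q :=
  Real.sInf_nonneg fun _ ⟨_, _, _, hr⟩ => hr ▸ abs_nonneg _

lemma psiStar_le_of_ne_zero (p : ℤ) {v : Fin n → ℤ} (hv : v ≠ 0) (hvQ : ∀ i, |v i| ≤ Q) :
    psiStar x Q ≤ |p + ∑ i, (v i : ℝ) * x i| := by
  refine csInf_le ⟨0, fun _ ⟨_, _, _, hr⟩ => hr ▸ abs_nonneg _⟩
    ⟨Fin.cons p v, fun h => hv ?_, by simpa using hvQ, by simp⟩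
  funext i
  simpa using congrFun h i.succ

lemma psiStar_le_abs_add_mul (i : Fin n) (p q : ℤ) (hq : q ≠ 0) (hqQ : |q| ≤ Q) :
    psiStar x Q ≤ |p + q * x i| := by
  classical
  have hv : (Pi.single i q : Fin n → ℤ) ≠ 0 := by simpa [Pi.single_eq_zero_iff] using hq
  convert psiStar_le_of_ne_zero x Q p hv fun l => ?_ using 3
  · simp [Pi.single_apply]
  · by_cases hl : l = i <;> simp [hl, hqQ]

lemma psiStar_le_abs_add_mul_add_mul {i i' : Fin n} (hii' : i ≠ i') (p q q' : ℤ) (hq' : q' ≠ 0)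
    (hqQ : |q| ≤ Q) (hq'Q : |q'| ≤ Q) :
    psiStar x Q ≤ |p + q * x i + q' * x i'| := by
  classical
  have hv : (Pi.single i q + Pi.single i' q' : Fin n → ℤ) ≠ 0 := fun h => hq' <| by
    simpa [hii'.symm] using congrFun h i'
  convert psiStar_le_of_ne_zero x Q p hv fun l => ?_ using 2
  · simp [Pi.single_apply, add_mul, Finset.sum_add_distrib, add_assoc]
  · by_cases hl : l = i
    · simp [hl, hii', hqQ]
    · by_cases hl' : l = i'
      · simp [hl', hii'.symm, hq'Q]
      · simp [hl, hl']

end PsiStar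

lemma Nat.exists_eq_mul_add_of_le {n m : ℕ} (hn : 0 < n) (hm : n ≤ m) :
    ∃ k j, 1 ≤ k ∧ j < n ∧ m = n * k + j :=
  ⟨m / n, m % n, (Nat.one_le_div_iff hn).2 hm, Nat.mod_lt m hn, (Nat.div_add_mod m n).symm⟩

lemma exists_abs_mul_le_and_dvd_sub_mul {B E Q : ℕ} (P : ℤ) (hB : 0 < B) (hQ : Q < E * B)
    (hQ2 : E * B ≤ Q * Q) :
    ∃ r s : ℤ, 0 < r ∧ r * Q < E * B ∧ |E * s| ≤ Q ∧ (B : ℤ) ∣ s - r * P := by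
  have hQ0 : 0 < Q := Nat.pos_of_ne_zero (by rintro rfl; omega)
  obtain ⟨R, hR⟩ : ∃ R, R = (E * B - 1) / Q := ⟨_, rfl⟩
  have hR0 : 0 < R := hR ▸ Nat.div_pos (by omega) hQ0
  have hRQ : R * Q ≤ E * B - 1 := hR ▸ Nat.div_mul_le_self _ _
  have hEB : E * B ≤ (R + 1) * Q := by
    have := Nat.lt_div_mul_add (a := E * B - 1) hQ0
    rw [← hR] at this
    rw [add_mul, one_mul]; omega
  obtain ⟨j, r, hr0, hrR, hdio⟩ := Real.exists_int_int_abs_mul_sub_le ((P : ℝ) / B) hR0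
  refine ⟨r, r * P - j * B, hr0, ?_, ?_, ⟨-j, by ring⟩⟩
  · have : r * Q ≤ R * Q := mul_le_mul_of_nonneg_right (by exact_mod_cast hrR) (by positivity)
    zify [show 1 ≤ E * B by omega] at hRQ
    linarith
  · have hBr : (0 : ℝ) < B := by exact_mod_cast hB
    have hs : |((r * P - j * B : ℤ) : ℝ)| ≤ B * (1 / (R + 1)) := by
      rw [show ((r * P - j * B : ℤ) : ℝ) = B * (r * ((P : ℝ) / B) - j) by
        push_cast; field_simp, abs_mul, abs_of_pos hBr]
      exact mul_le_mul_of_nonneg_left hdio hBr.le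
    have hEs : |((E * (r * P - j * B) : ℤ) : ℝ)| ≤ Q := by
      rw [Int.cast_mul, abs_mul, Int.cast_natCast, abs_of_nonneg (Nat.cast_nonneg _)]
      calc (E : ℝ) * |((r * P - j * B : ℤ) : ℝ)| ≤ E * (B * (1 / (R + 1))) := by gcongr
        _ = (E * B : ℕ) / (R + 1) := by push_cast; ring
        _ ≤ Q := by
          rw [div_le_iff₀ (by positivity)]
          exact_mod_cast (show E * B ≤ Q * (R + 1) by linarith)
    exact_mod_cast hEs

lemma StrictMono.exists_le_lt_succ {f : ℕ → ℕ} (hf : StrictMono f) {K Q : ℕ}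
    (hQ : f K ≤ Q) :
    ∃ k, K ≤ k ∧ f k ≤ Q ∧ Q < f (k + 1) := by
  classical
  have hex : ∃ k, Q < f k := ⟨Q + 1, Nat.lt_succ_self Q |>.trans_le (hf.id_le _)⟩
  have hK : K < Nat.find hex := by
    by_contra! hle
    exact (Nat.find_spec hex).not_ge ((hf.monotone hle).trans hQ)
  refine ⟨Nat.find hex - 1, by omega, not_lt.1 (Nat.find_min hex (by omega)), ?_⟩
  rw [Nat.sub_add_cancel (by omega)]
  exact Nat.find_spec hex

lemma Spartial_succ (a : ℕ → ℕ) (n j k : ℕ) :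
    Spartial a n j (k + 1) = Spartial a n j k + 1 / a (n * (k + 1) + j) :=
  Finset.sum_range_succ _ _

namespace IsConstrSeq

variable {n : ℕ} {c : ℝ} {M a : ℕ → ℕ} (ha : IsConstrSeq n c M a)
include ha

lemma zero_eq : a 0 = 1 := ha.1

lemma initial_eq {j : ℕ} (hj : 1 ≤ j) (hjn : j ≤ n) : a j = 8 * j.factorial := ha.2.1 j hj hjn

lemma first_eq {k : ℕ} (hk : 1 ≤ k) : a (n * k + 1) = a (n * k) ^ M k := ha.2.2.1 k hk

lemma middle_eq {k j : ℕ} (hk : 1 ≤ k) (hj : 1 ≤ j) (hjn : j ≤ n - 1) :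
    a (n * k + j) = a (n * k + 1) ^ j := by
  obtain rfl | hj := hj.eq_or_lt
  · rw [pow_one]
  · exact ha.2.2.2.1 k hk j hj hjn

lemma last_eq {k : ℕ} (hk : 1 ≤ k) :
    a (n * k + n) = ⌈c⁻¹ * (a (n * k + 1) : ℝ)⌉₊ * a (n * k + n - 1) := ha.2.2.2.2 k hk

end IsConstrSeq

structure Admissible (n : ℕ) (c : ℝ) (M a : ℕ → ℕ) : Prop where
  two_le_n : 2 ≤ n
  c_pos : 0 < c
  c_le_one : c ≤ 1
  isConstrSeq : IsConstrSeq n c M a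
  add_two_le_M : ∀ k, n + 2 ≤ M k

namespace Admissible

variable {n : ℕ} {c : ℝ} {M a : ℕ → ℕ} (h : Admissible n c M a)
include h

lemma two_le {m : ℕ} (hm : 1 ≤ m) : 2 ≤ a m := by
  have hn := h.two_le_n
  have ha := h.isConstrSeq
  induction m using Nat.strong_induction_on with
  | _ m ih =>
  rcases le_or_gt m n with hmn | hmn
  · rw [ha.initial_eq hm hmn]
    linarith [Nat.factorial_pos m]
  obtain ⟨k, j, hk, hj, hm'⟩ :=
    Nat.exists_eq_mul_add_of_le (by omega) (Nat.le_sub_one_of_lt hmn)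
  obtain rfl : m = n * k + (j + 1) := by omega
  have hM := h.add_two_le_M k
  rcases Nat.eq_zero_or_pos j with rfl | hj0
  · rw [ha.first_eq hk]
    exact (ih _ (by omega) (by nlinarith)).trans (Nat.le_self_pow (by omega) _)
  rcases Nat.lt_or_ge (j + 1) n with hjn | hjn
  · rw [ha.middle_eq hk (by omega) (by omega)]
    exact (ih _ (by omega) (by omega)).trans (Nat.le_self_pow (by omega) _)
  · rw [show j + 1 = n by omega, ha.last_eq hk]
    have hceil : 0 < ⌈c⁻¹ * (a (n * k + 1) : ℝ)⌉₊ := by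
      have := ih (n * k + 1) (by omega) (by omega)
      have := h.c_pos
      rw [Nat.ceil_pos]
      positivity
    exact (ih _ (by omega) (by omega)).trans (Nat.le_mul_of_pos_left _ hceil)

lemma exists_succ_eq_mul (m : ℕ) : ∃ t, 2 ≤ t ∧ a (m + 1) = a m * t := by
  have hn := h.two_le_n
  have ha := h.isConstrSeq
  rcases Nat.eq_zero_or_pos m with rfl | hm
  · exact ⟨8, by norm_num, by simp [ha.zero_eq, ha.initial_eq le_rfl (by omega)]⟩
  rcases Nat.lt_or_ge m n with hmn | hmn
  · refine ⟨m + 1, by omega, ?_⟩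
    rw [ha.initial_eq hm hmn.le, ha.initial_eq (by omega) hmn, Nat.factorial_succ]
    ring
  obtain ⟨k, j, hk, hj, rfl⟩ := Nat.exists_eq_mul_add_of_le (by omega) hmn
  have hA := h.two_le (m := n * k + 1) (by omega)
  have hM := h.add_two_le_M k
  rcases Nat.eq_zero_or_pos j with rfl | hj0
  · refine ⟨a (n * k) ^ (M k - 1), ?_, ?_⟩
    · calc 2 ≤ a (n * k) := h.two_le (by nlinarith)
        _ ≤ a (n * k) ^ (M k - 1) := Nat.le_self_pow (by omega) _
    · rw [add_zero, ha.first_eq hk, ← pow_succ', Nat.sub_add_cancel (by omega)]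
  rcases Nat.lt_or_ge (j + 1) n with hjn | hjn
  · refine ⟨a (n * k + 1), hA, ?_⟩
    rw [add_assoc, ha.middle_eq hk (by omega) (by omega), ha.middle_eq hk hj0 (by omega),
      pow_succ]
  · refine ⟨⌈c⁻¹ * (a (n * k + 1) : ℝ)⌉₊, ?_, ?_⟩
    · have hc : 1 ≤ c⁻¹ := one_le_inv₀ h.c_pos |>.2 h.c_le_one
      have hA' : (2 : ℝ) ≤ a (n * k + 1) := by exact_mod_cast hA
      exact Nat.lt_ceil.2 (by push_cast; nlinarith)
    · rw [show n * k + j + 1 = n * k + n by omega, ha.last_eq hk, mul_comm,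
        show n * k + n - 1 = n * k + j by omega]

lemma pos (m : ℕ) : 0 < a m := by
  rcases Nat.eq_zero_or_pos m with rfl | hm
  · simp [h.isConstrSeq.zero_eq]
  · linarith [h.two_le hm]

lemma dvd_succ (m : ℕ) : a m ∣ a (m + 1) := by
  obtain ⟨t, -, ht⟩ := h.exists_succ_eq_mul m
  exact ⟨t, ht⟩

lemma two_mul_le_succ (m : ℕ) : 2 * a m ≤ a (m + 1) := by
  obtain ⟨t, ht, he⟩ := h.exists_succ_eq_mul m
  rw [he, mul_comm]
  exact Nat.mul_le_mul_left _ ht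

lemma strictMono : StrictMono a :=
  strictMono_nat_of_lt_succ fun m => by linarith [h.two_mul_le_succ m, h.pos m]

lemma dvd_of_le {m m' : ℕ} (hm : m ≤ m') : a m ∣ a m' :=
  Nat.rel_of_forall_rel_succ_of_le (· ∣ ·) h.dvd_succ hm

lemma two_pow_mul_le (m i : ℕ) : 2 ^ i * a m ≤ a (m + i) := by
  induction i with
  | zero => simp
  | succ i ih =>
    rw [pow_succ', mul_assoc, ← add_assoc]
    exact (Nat.mul_le_mul_left 2 ih).trans (h.two_mul_le_succ _)

lemma one_div_le_geometric (m i : ℕ) : (1 : ℝ) / a (m + n * i) ≤ (1 / 2) ^ i / a m := by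
  have hpos := h.pos m
  have hi : 2 ^ i ≤ 2 ^ (n * i) := Nat.pow_le_pow_right (by norm_num) (by nlinarith [h.two_le_n])
  have hle : (2 : ℝ) ^ i * a m ≤ a (m + n * i) := by
    exact_mod_cast (Nat.mul_le_mul_right _ hi).trans (h.two_pow_mul_le m (n * i))
  rw [div_pow, one_pow, div_div, one_div_le_one_div (by exact_mod_cast h.pos _) (by positivity)]
  exact hle

lemma summable_one_div (j : ℕ) : Summable fun i => (1 : ℝ) / a (n * i + j) :=
  (summable_geometric_two.div_const (a j)).of_nonneg_of_le (fun _ => by positivity)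
    fun i => by simpa [add_comm] using h.one_div_le_geometric j i

lemma xiCoord_sub_Spartial_mem (j k : ℕ) :
    xiCoord a n j - Spartial a n j k ∈ Set.Icc (0 : ℝ) (2 / a (n * (k + 1) + j)) := by
  have hsplit := (h.summable_one_div j).sum_add_tsum_nat_add (k + 1)
  have htail : Summable fun i => (1 : ℝ) / a (n * (i + (k + 1)) + j) :=
    (h.summable_one_div j).comp_injective (add_left_injective (k + 1))
  have hgeom : ∀ i, (1 : ℝ) / a (n * (i + (k + 1)) + j) ≤ (1 / 2) ^ i / a (n * (k + 1) + j) :=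
    fun i => by
      rw [show n * (i + (k + 1)) + j = n * (k + 1) + j + n * i by ring]
      exact h.one_div_le_geometric _ i
  rw [xiCoord, ← hsplit, Spartial]
  push_cast
  rw [add_sub_cancel_left]
  refine ⟨tsum_nonneg fun _ => by positivity, ?_⟩
  calc ∑' i, (1 : ℝ) / a (n * (i + (k + 1)) + j)
      ≤ ∑' i, (1 / 2 : ℝ) ^ i / a (n * (k + 1) + j) :=
        htail.tsum_le_tsum hgeom (summable_geometric_two.div_const _)
    _ = 2 / a (n * (k + 1) + j) := by rw [tsum_div_const, tsum_geometric_two]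

lemma exists_int_eq_mul_Spartial {j k d : ℕ} (hd : a (n * k + j) ∣ d) :
    ∃ p : ℤ, (d : ℝ) * Spartial a n j k = p := by
  refine ⟨(∑ i ∈ Finset.range (k + 1), d / a (n * i + j) : ℕ), ?_⟩
  rw [Int.cast_natCast, Nat.cast_sum, Spartial, Rat.cast_sum, Finset.mul_sum]
  refine Finset.sum_congr rfl fun i hi => ?_
  have hdvd : a (n * i + j) ∣ d :=
    (h.dvd_of_le (by have := Finset.mem_range.1 hi; nlinarith)).trans hd
  rw [Nat.cast_div hdvd (by exact_mod_cast (h.pos _).ne')]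
  push_cast
  ring

lemma pow_le_mul_last {k : ℕ} (hk : 1 ≤ k) :
    (a (n * k + 1) : ℝ) ^ n ≤ c * a (n * k + n) := by
  have hn := h.two_le_n
  have hlast := h.isConstrSeq.last_eq hk
  rw [show n * k + n - 1 = n * k + (n - 1) by omega,
    h.isConstrSeq.middle_eq hk (by omega) le_rfl] at hlast
  set A := a (n * k + 1)
  have hceil : c⁻¹ * (A : ℝ) ≤ ⌈c⁻¹ * (A : ℝ)⌉₊ := Nat.le_ceil _
  have hc := h.c_pos
  calc (A : ℝ) ^ n = c * (c⁻¹ * A) * (A : ℝ) ^ (n - 1) := by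
        rw [← mul_assoc, mul_inv_cancel₀ hc.ne', one_mul, ← pow_succ',
          Nat.sub_add_cancel (by omega)]
    _ ≤ c * ⌈c⁻¹ * (A : ℝ)⌉₊ * (A : ℝ) ^ (n - 1) := by gcongr
    _ = c * a (n * k + n) := by rw [hlast]; push_cast; ring

lemma pow_le_first_succ (k : ℕ) : a (n * k + n) ^ (n + 2) ≤ a (n * (k + 1) + 1) := by
  rw [h.isConstrSeq.first_eq (by omega), show n * (k + 1) = n * k + n by ring]
  exact Nat.pow_le_pow_right (h.pos _) (h.add_two_le_M _)

lemma psiStar_le_two_mul_div {j k Q : ℕ} (hj : 1 ≤ j) (hjn : j ≤ n)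
    (hQ : a (n * k + j) ≤ Q) :
    psiStar (xVec a n) Q ≤ 2 * a (n * k + j) / a (n * (k + 1) + j) := by
  obtain ⟨p, hp⟩ := h.exists_int_eq_mul_Spartial (j := j) (k := k) dvd_rfl
  have hx : xVec a n ⟨j - 1, by omega⟩ = xiCoord a n j := by
    simp only [xVec, Nat.sub_add_cancel hj]
  have hψ := psiStar_le_abs_add_mul (xVec a n) Q ⟨j - 1, by omega⟩ (-p) (a (n * k + j))
    (by exact_mod_cast (h.pos _).ne') (by simpa using hQ)
  obtain ⟨hlo, hhi⟩ := h.xiCoord_sub_Spartial_mem j k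
  have hpos : (0 : ℝ) < a (n * k + j) := by exact_mod_cast h.pos _
  rw [hx, Int.cast_neg, ← hp, Int.cast_natCast,
    show -(a (n * k + j) * (Spartial a n j k : ℝ)) + a (n * k + j) * xiCoord a n j
      = a (n * k + j) * (xiCoord a n j - Spartial a n j k) by ring,
    abs_of_nonneg (by positivity)] at hψ
  calc psiStar (xVec a n) Q ≤ a (n * k + j) * (xiCoord a n j - Spartial a n j k) := hψ
    _ ≤ a (n * k + j) * (2 / a (n * (k + 1) + j)) := by gcongr
    _ = 2 * a (n * k + j) / a (n * (k + 1) + j) := by ring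

lemma pow_mul_psiStar_le_of_le_last {k Q : ℕ} (hk : 1 ≤ k) (hAQ : a (n * k + 1) ≤ Q)
    (hQB : Q ≤ a (n * k + n)) : (Q : ℝ) ^ n * psiStar (xVec a n) Q ≤ c := by
  have hn := h.two_le_n
  set A := a (n * k + 1)
  set B := a (n * k + n)
  set A' := a (n * (k + 1) + 1)
  have hA : (1 : ℝ) ≤ A := by exact_mod_cast h.pos _
  have hB : (2 : ℝ) ≤ B := by exact_mod_cast h.two_le (by omega)
  have hA' : (0 : ℝ) < A' := by exact_mod_cast h.pos _
  have hBA' : (B : ℝ) ^ n * B ^ 2 ≤ A' := by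
    rw [← pow_add]; exact_mod_cast h.pow_le_first_succ k
  have hAcB : (A : ℝ) ≤ c * B :=
    (le_self_pow₀ hA (by omega)).trans (h.pow_le_mul_last hk)
  calc (Q : ℝ) ^ n * psiStar (xVec a n) Q ≤ (B : ℝ) ^ n * (2 * A / A') := by
        gcongr
        · exact psiStar_nonneg _ _
        · exact h.psiStar_le_two_mul_div le_rfl (by omega) hAQ
    _ ≤ (B : ℝ) ^ n * (c * B ^ 2 / A') := by
        have : 2 * (A : ℝ) ≤ c * B ^ 2 := by
          nlinarith [mul_le_mul_of_nonneg_right hAcB (by linarith : (0 : ℝ) ≤ B)]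
        gcongr
    _ = c * ((B : ℝ) ^ n * B ^ 2 / A') := by ring
    _ ≤ c := mul_le_of_le_one_right h.c_pos.le ((div_le_one hA').2 hBA')

lemma pow_mul_psiStar_le_of_sq_le {k Q : ℕ} (hBQ : a (n * k + n) ≤ Q)
    (hQA : Q * Q ≤ a (n * (k + 1) + 1)) : (Q : ℝ) ^ n * psiStar (xVec a n) Q ≤ c := by
  have hn := h.two_le_n
  set B := a (n * k + n)
  set A' := a (n * (k + 1) + 1)
  set B' := a (n * (k + 1) + n)
  have hB : (2 : ℝ) ≤ B := by exact_mod_cast h.two_le (by omega)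
  have hB' : (0 : ℝ) < B' := by exact_mod_cast h.pos _
  have hBQ' : (B : ℝ) ≤ Q := by exact_mod_cast hBQ
  have hQA' : (Q : ℝ) * Q ≤ A' := by exact_mod_cast hQA
  calc (Q : ℝ) ^ n * psiStar (xVec a n) Q ≤ (Q : ℝ) ^ n * (2 * B / B') := by
        gcongr
        exact h.psiStar_le_two_mul_div (by omega) le_rfl hBQ
    _ ≤ (Q : ℝ) ^ n * (Q ^ 2 / B') := by
        gcongr
        nlinarith
    _ = (Q : ℝ) ^ (n + 2) / B' := by ring
    _ ≤ ((Q : ℝ) * Q) ^ n / B' := by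
        rw [← sq, ← pow_mul, mul_comm 2 n]
        gcongr
        · exact_mod_cast (h.pos _).trans_le hBQ
        · omega
    _ ≤ (A' : ℝ) ^ n / B' := by gcongr
    _ ≤ c := (div_le_iff₀ hB').2 (h.pow_le_mul_last (by omega))

lemma exists_linear_form_eq_tails {k Q : ℕ} (hQ : Q < a (n * (k + 1) + 1))
    (hQ2 : a (n * (k + 1) + 1) ≤ Q * Q) :
    ∃ p q r : ℤ, 0 < r ∧ r * Q < a (n * (k + 1) + 1) ∧ |q| ≤ Q ∧
      p + q * xiCoord a n 1 + (-r) * xiCoord a n n =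
        q * (xiCoord a n 1 - Spartial a n 1 (k + 1))
          - r * (xiCoord a n n - Spartial a n n (k + 1)) - r / a (n * (k + 1) + n) := by
  have hn := h.two_le_n
  have hM := h.add_two_le_M (k + 1)
  obtain ⟨E, hE⟩ : ∃ E, E = a (n * k + n) ^ (M (k + 1) - 1) := ⟨_, rfl⟩
  have hEB : E * a (n * k + n) = a (n * (k + 1) + 1) := by
    rw [hE, ← pow_succ, Nat.sub_add_cancel (show 1 ≤ M (k + 1) by omega),
      h.isConstrSeq.first_eq (by omega), show n * (k + 1) = n * k + n by ring]
  have hAE : a (n * k + 1) ∣ E :=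
    (h.dvd_of_le (by omega)).trans (hE ▸ dvd_pow_self _ (by omega))
  obtain ⟨m, hm⟩ := h.exists_int_eq_mul_Spartial hAE
  obtain ⟨P, hP⟩ := h.exists_int_eq_mul_Spartial (j := n) (k := k) dvd_rfl
  obtain ⟨r, s, hr0, hrQ, hsQ, t, ht⟩ :=
    exists_abs_mul_le_and_dvd_sub_mul P (h.pos _) (hEB ▸ hQ) (hEB ▸ hQ2)
  rw [← Nat.cast_mul, hEB] at hrQ
  -- `E s ξ_1 = s m + s / B_k + tail` and `r ξ_n = r P / B_k + r / B_{k+1} + tail`,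
  -- while `s / B_k - r P / B_k = t`.
  refine ⟨-(s * m + t), E * s, r, hr0, hrQ, hsQ, ?_⟩
  have hE0 : (E : ℝ) ≠ 0 := by
    exact_mod_cast (Nat.pos_of_mul_pos_right ((h.pos _).trans_eq hEB.symm)).ne'
  have hB0 : (a (n * k + n) : ℝ) ≠ 0 := by exact_mod_cast (h.pos _).ne'
  have hB'0 : (a (n * (k + 1) + n) : ℝ) ≠ 0 := by exact_mod_cast (h.pos _).ne'
  have hS1 : (Spartial a n 1 k : ℝ) = m / E := by field_simp; linarith
  have hSn : (Spartial a n n k : ℝ) = P / a (n * k + n) := by field_simp; linarith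
  have hs : (s : ℝ) = r * P + a (n * k + n) * t := by
    have : (s : ℝ) - r * P = a (n * k + n) * t := by exact_mod_cast ht
    linarith
  have hA' : (a (n * (k + 1) + 1) : ℝ) = E * a (n * k + n) := by exact_mod_cast hEB.symm
  rw [Spartial_succ, Spartial_succ]
  push_cast
  rw [hS1, hSn, hA', hs]
  field_simp
  ring

lemma exists_psiStar_le_of_le_sq {k Q : ℕ} (hQ : Q < a (n * (k + 1) + 1))
    (hQ2 : a (n * (k + 1) + 1) ≤ Q * Q) :
    ∃ r : ℤ, 0 < r ∧ r * Q < a (n * (k + 1) + 1) ∧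
      psiStar (xVec a n) Q ≤ r / a (n * (k + 1) + n) + 4 * Q / a (n * (k + 2) + 1) := by
  have hn := h.two_le_n
  obtain ⟨p, q, r, hr0, hrQ, hqQ, hform⟩ := h.exists_linear_form_eq_tails hQ hQ2
  have hrQ' : r ≤ Q := by nlinarith
  refine ⟨r, hr0, hrQ, ?_⟩
  have hψ := psiStar_le_abs_add_mul_add_mul (xVec a n) Q (i := ⟨0, by omega⟩)
    (i' := ⟨n - 1, by omega⟩) (by simp [Fin.ext_iff]; omega) p q (-r)
    (by omega) hqQ (by rwa [abs_neg, abs_of_pos hr0])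
  have hxn : xVec a n ⟨n - 1, by omega⟩ = xiCoord a n n := by
    simp only [xVec, Nat.sub_add_cancel (by omega : 1 ≤ n)]
  rw [show xVec a n ⟨0, by omega⟩ = xiCoord a n 1 from rfl, hxn, Int.cast_neg, hform] at hψ
  obtain ⟨hT1, hT1'⟩ := h.xiCoord_sub_Spartial_mem 1 (k + 1)
  obtain ⟨hTn, hTn'⟩ := h.xiCoord_sub_Spartial_mem n (k + 1)
  set T1 := xiCoord a n 1 - Spartial a n 1 (k + 1)
  set Tn := xiCoord a n n - Spartial a n n (k + 1)
  have hqQ' : |(q : ℝ)| ≤ Q := by exact_mod_cast hqQ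
  have hrQ'' : (r : ℝ) ≤ Q := by exact_mod_cast hrQ'
  have hr0' : (0 : ℝ) < r := by exact_mod_cast hr0
  have hB' : (0 : ℝ) < a (n * (k + 1) + n) := by exact_mod_cast h.pos _
  have hA'' : (0 : ℝ) < a (n * (k + 2) + 1) := by exact_mod_cast h.pos _
  have hA''B'' : (a (n * (k + 2) + 1) : ℝ) ≤ a (n * (k + 2) + n) := by
    exact_mod_cast h.strictMono.monotone (Nat.add_le_add_left (by omega) _)
  have hTn'' : Tn ≤ 2 / a (n * (k + 2) + 1) := hTn'.trans (by gcongr)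
  calc psiStar (xVec a n) Q ≤ |q * T1 - r * Tn - r / a (n * (k + 1) + n)| := hψ
    _ ≤ |(q : ℝ)| * T1 + r * Tn + r / a (n * (k + 1) + n) := by
        refine (abs_sub _ _).trans ?_
        rw [abs_div, abs_of_pos hr0', abs_of_pos hB']
        gcongr
        refine (abs_sub _ _).trans_eq ?_
        rw [abs_mul, abs_mul (r : ℝ), abs_of_nonneg hT1, abs_of_nonneg hTn, abs_of_pos hr0']
    _ ≤ Q * (2 / a (n * (k + 2) + 1)) + Q * (2 / a (n * (k + 2) + 1))
        + r / a (n * (k + 1) + n) := by gcongr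
    _ = r / a (n * (k + 1) + n) + 4 * Q / a (n * (k + 2) + 1) := by ring

lemma pow_mul_psiStar_le_of_le_sq {k Q : ℕ} (hQ : Q < a (n * (k + 1) + 1))
    (hQ2 : a (n * (k + 1) + 1) ≤ Q * Q) :
    (Q : ℝ) ^ n * psiStar (xVec a n) Q ≤ c + 4 / a (n * (k + 1) + 1) := by
  have hn := h.two_le_n
  obtain ⟨r, hr0, hrQ, hψ⟩ := h.exists_psiStar_le_of_le_sq hQ hQ2
  set A' := a (n * (k + 1) + 1)
  set B' := a (n * (k + 1) + n)
  set A'' := a (n * (k + 2) + 1)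
  have hA' : (0 : ℝ) < A' := by exact_mod_cast h.pos _
  have hB' : (0 : ℝ) < B' := by exact_mod_cast h.pos _
  have hA'' : (0 : ℝ) < A'' := by exact_mod_cast h.pos _
  have hQA' : (Q : ℝ) ≤ A' := by exact_mod_cast hQ.le
  have hrQ' : (r : ℝ) * Q ≤ A' := by exact_mod_cast hrQ.le
  have hr : r * (Q : ℝ) ^ n ≤ c * B' :=
    calc r * (Q : ℝ) ^ n = r * Q * (Q : ℝ) ^ (n - 1) := by
          rw [mul_assoc, ← pow_succ', Nat.sub_add_cancel (by omega)]
      _ ≤ A' * (A' : ℝ) ^ (n - 1) := by gcongr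
      _ = (A' : ℝ) ^ n := by rw [← pow_succ', Nat.sub_add_cancel (by omega)]
      _ ≤ c * B' := h.pow_le_mul_last (by omega)
  have hA'A'' : (A' : ℝ) ^ (n + 1) * A' ≤ A'' := by
    have hA'B' : (A' : ℝ) ≤ B' := by exact_mod_cast h.strictMono.monotone (by omega)
    calc (A' : ℝ) ^ (n + 1) * A' = (A' : ℝ) ^ (n + 2) := by ring
      _ ≤ (B' : ℝ) ^ (n + 2) := by gcongr
      _ ≤ A'' := by exact_mod_cast h.pow_le_first_succ (k + 1)
  calc (Q : ℝ) ^ n * psiStar (xVec a n) Q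
      ≤ (Q : ℝ) ^ n * (r / B' + 4 * Q / A'') := by gcongr
    _ = r * (Q : ℝ) ^ n / B' + 4 * Q ^ (n + 1) / A'' := by ring
    _ ≤ c + 4 / A' := by
        refine add_le_add ((div_le_iff₀ hB').2 hr) ((div_le_div_iff₀ hA'' hA').2 ?_)
        calc 4 * (Q : ℝ) ^ (n + 1) * A' ≤ 4 * (A' ^ (n + 1) * A') := by
              rw [mul_assoc]; gcongr
          _ ≤ 4 * A'' := by gcongr

lemma pow_mul_psiStar_le_of_mem_block {k Q : ℕ} (hk : 1 ≤ k) (hAQ : a (n * k + 1) ≤ Q)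
    (hQA : Q < a (n * (k + 1) + 1)) :
    (Q : ℝ) ^ n * psiStar (xVec a n) Q ≤ c + 4 / a (n * (k + 1) + 1) := by
  have h4 : (0 : ℝ) ≤ 4 / a (n * (k + 1) + 1) := by positivity
  rcases le_or_gt Q (a (n * k + n)) with hQB | hBQ
  · linarith [h.pow_mul_psiStar_le_of_le_last hk hAQ hQB]
  rcases le_or_gt (Q * Q) (a (n * (k + 1) + 1)) with hQA' | hAQ'
  · linarith [h.pow_mul_psiStar_le_of_sq_le hBQ.le hQA']
  · exact h.pow_mul_psiStar_le_of_le_sq hQA hAQ'.le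

lemma eventually_pow_mul_psiStar_le {ε : ℝ} (hε : 0 < ε) :
    ∀ᶠ Q : ℕ in atTop, (Q : ℝ) ^ n * psiStar (xVec a n) Q ≤ c + ε := by
  have hn := h.two_le_n
  obtain ⟨K, hK⟩ := exists_nat_ge (4 / ε)
  have hf : StrictMono fun k => a (n * k + 1) := h.strictMono.comp fun _ _ hkl =>
    Nat.add_lt_add_right (Nat.mul_lt_mul_of_pos_left hkl (by omega)) 1
  filter_upwards [eventually_ge_atTop (a (n * (K + 1) + 1))] with Q hQ
  obtain ⟨k, hKk, hkQ, hQk⟩ := hf.exists_le_lt_succ hQ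
  have hKa : (K : ℝ) ≤ a (n * (k + 1) + 1) := by
    exact_mod_cast (by nlinarith : K ≤ n * (k + 1) + 1).trans (h.strictMono.id_le _)
  have hsmall : 4 / (a (n * (k + 1) + 1) : ℝ) ≤ ε := by
    rw [div_le_iff₀ (by exact_mod_cast h.pos _), mul_comm]
    exact (div_le_iff₀ hε).1 (hK.trans hKa)
  linarith [h.pow_mul_psiStar_le_of_mem_block (by omega) hkQ hQk]

end Admissible

theorem theta_star_upper (n : ℕ) (hn : 2 ≤ n) (c : ℝ) (hc : c ∈ Set.Ioo (0:ℝ) 1) :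
    ∃ M : ℕ → ℕ, (∀ k, 2 ≤ M k) ∧ ∀ a : ℕ → ℕ, IsConstrSeq n c M a →
      (∀ ε : ℝ, 0 < ε → ∀ᶠ Q : ℕ in Filter.atTop,
        psiStar (xVec a n) Q ≤ c * (1 + ε) / (Q : ℝ) ^ n) ∧
      thetaStar (xVec a n) ≤ c := by
  refine ⟨fun _ => n + 2, fun _ => Nat.le_add_left 2 n, fun a ha => ?_⟩
  have h : Admissible n c (fun _ => n + 2) a := ⟨hn, hc.1, hc.2.le, ha, fun _ => le_rfl⟩
  refine ⟨fun ε hε => ?_, ?_⟩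
  · filter_upwards [h.eventually_pow_mul_psiStar_le (mul_pos hc.1 hε), eventually_gt_atTop 0]
      with Q hQ hQ0
    rw [le_div_iff₀ (by positivity), mul_comm]
    linarith
  · refine le_of_forall_pos_le_add fun ε hε =>
      limsup_le_of_le ?_ (h.eventually_pow_mul_psiStar_le hε)
    exact isCoboundedUnder_le_of_le atTop fun Q => mul_nonneg (by positivity) (psiStar_nonneg _ _)
end

section
/- With the construction of §2, in Case 3 Subcase 3i (e ≥ 1), the choice b₁ = N_e, bₙ = −a_{ne} yields |b₁ R_{1,k} + bₙ R_{n,k}| ≤ 2 a_{ne}/a_{n(k+1)}, and under the condition a_{n(e−1)} ≤ (1/4)a_{ne}^{1/2} together with Q ≤ N_{e−1} < 2 a_{n(e−1)} a_{nk+1}/a_{ne} and a_{n(k+1)} ≥ c⁻¹a_{nk+1}ⁿ, this bound is < c Q^{−n}. -/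
open Filter Finset

theorem constr_two (n : ℕ) (hn : 2 ≤ n) (c : ℝ) (hc : c ∈ Set.Ioo (0:ℝ) 1) (M : ℕ → ℕ)
    (hM : ∀ k, 2 ≤ M k) (a : ℕ → ℕ) (ha : IsConstrSeq n c M a) :
    ∀ m, 1 ≤ m → 2 ≤ a m := by
  obtain ⟨h0, h1, h2, h3, h4⟩ := ha
  intro m
  induction m using Nat.strong_induction_on with
  | _ m IH =>
  intro hm
  by_cases hmn : m ≤ n
  · rw [h1 m hm hmn]
    have := Nat.factorial_pos m
    calc 2 ≤ 8 * 1 := by norm_num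
    _ ≤ 8 * m.factorial := Nat.mul_le_mul_left _ this
  · push_neg at hmn
    set q := m / n with hqdef
    set r := m % n with hrdef
    have hqr : n * q + r = m := Nat.div_add_mod m n
    have hrn : r < n := Nat.mod_lt _ (by omega)
    rcases Nat.eq_zero_or_pos r with hr0 | hrpos
    · -- r = 0, m = n*q, q ≥ 2
      have hq2 : 2 ≤ q := by nlinarith
      have hkey := h4 (q - 1) (by omega)
      have hidx : n * (q - 1) + n = m := by
        have h' : q - 1 + 1 = q := by omega
        have : n * (q-1) + n = n * (q - 1 + 1) := by ring
        rw [this, h']; omega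
      rw [hidx] at hkey
      have hprev : 2 ≤ a (m - 1) := by
        apply IH <;> omega
      have hceil : 1 ≤ ⌈c⁻¹ * (a (n * (q - 1) + 1) : ℝ)⌉₊ := by
        have h1' : 2 ≤ a (n * (q-1) + 1) := by
          apply IH <;> nlinarith [Nat.sub_le q 1, Nat.mul_le_mul_left n (Nat.sub_le q 1)]
        have : (0:ℝ) < c⁻¹ * (a (n * (q - 1) + 1) : ℝ) := by
          apply mul_pos (inv_pos.mpr hc.1)
          exact_mod_cast by omega
        exact Nat.one_le_iff_ne_zero.mpr (by positivity)
      calc 2 ≤ 1 * a (m - 1) := by omega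
      _ ≤ ⌈c⁻¹ * (a (n * (q - 1) + 1) : ℝ)⌉₊ * a (m - 1) :=
          Nat.mul_le_mul_right _ hceil
      _ = a m := hkey.symm
    · rcases eq_or_lt_of_le (show 1 ≤ r by omega) with hr1 | hr2
      · -- r = 1
        have hq1 : 1 ≤ q := by nlinarith
        have hkey := h2 q hq1
        have hidx : n * q + 1 = m := by omega
        rw [hidx] at hkey
        have hprev : 2 ≤ a (n * q) := IH (n * q) (by omega) (by nlinarith)
        rw [hkey]
        calc 2 ≤ a (n*q) := hprev
        _ = a (n*q) ^ 1 := (pow_one _).symm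
        _ ≤ a (n*q) ^ M q := Nat.pow_le_pow_right (by omega) (by have := hM q; omega)
      · -- 2 ≤ r ≤ n-1
        have hq1 : 1 ≤ q := by nlinarith
        have hkey := h3 q hq1 r hr2 (by omega)
        have hidx : n * q + r = m := hqr
        rw [hidx] at hkey
        have hprev : 2 ≤ a (n * q + 1) := IH (n * q + 1) (by omega) (by omega)
        rw [hkey]
        calc 2 ≤ a (n*q+1) := hprev
        _ = a (n*q+1) ^ 1 := (pow_one _).symm
        _ ≤ a (n*q+1) ^ r := Nat.pow_le_pow_right (by omega) (by omega)

theorem constr_growth (n : ℕ) (hn : 2 ≤ n) (c : ℝ) (hc : c ∈ Set.Ioo (0:ℝ) 1) (M : ℕ → ℕ)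
    (hM : ∀ k, 2 ≤ M k) (a : ℕ → ℕ) (ha : IsConstrSeq n c M a) :
    ∀ m, 2 * a m ≤ a (m + 1) := by
  have h2a := constr_two n hn c hc M hM a ha
  obtain ⟨h0, h1, h2, h3, h4⟩ := ha
  intro m
  rcases Nat.eq_zero_or_pos m with hm0 | hm1
  · subst hm0
    rw [h0, h1 1 le_rfl (by omega)]
    simp [Nat.factorial]
  by_cases hmn : m + 1 ≤ n
  · rw [h1 m hm1 (by omega), h1 (m+1) (by omega) hmn, Nat.factorial_succ]
    have := Nat.factorial_pos m
    nlinarith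
  · push_neg at hmn
    set q := (m+1) / n with hqdef
    set r := (m+1) % n with hrdef
    have hqr : n * q + r = m + 1 := Nat.div_add_mod (m+1) n
    have hrn : r < n := Nat.mod_lt _ (by omega)
    rcases Nat.eq_zero_or_pos r with hr0 | hrpos
    · -- r = 0 : m+1 = n*q, q ≥ 2 : last rule
      have hq2 : 2 ≤ q := by nlinarith
      have hkey := h4 (q - 1) (by omega)
      have hidx : n * (q - 1) + n = m + 1 := by
        have h' : q - 1 + 1 = q := by omega
        have : n * (q-1) + n = n * (q - 1 + 1) := by ring
        rw [this, h']; omega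
      rw [hidx] at hkey
      simp only [Nat.add_sub_cancel] at hkey
      have hceil : 2 ≤ ⌈c⁻¹ * (a (n * (q - 1) + 1) : ℝ)⌉₊ := by
        have hx : 2 ≤ a (n * (q-1) + 1) := h2a _ (by omega)
        have hc1 : (1:ℝ) ≤ c⁻¹ := le_of_lt ((one_lt_inv₀ hc.1).mpr hc.2)
        have hxR : (2:ℝ) ≤ (a (n * (q-1) + 1) : ℝ) := by exact_mod_cast hx
        have h2le : (2:ℝ) ≤ c⁻¹ * (a (n * (q - 1) + 1) : ℝ) := by nlinarith
        have := le_trans h2le (Nat.le_ceil _)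
        exact_mod_cast this
      calc 2 * a m ≤ ⌈c⁻¹ * (a (n * (q - 1) + 1) : ℝ)⌉₊ * a m :=
            Nat.mul_le_mul_right _ hceil
      _ = a (m+1) := hkey.symm
    · rcases eq_or_lt_of_le (show 1 ≤ r by omega) with hr1 | hr2
      · -- r = 1 : m = n*q, power rule
        have hq1 : 1 ≤ q := by nlinarith
        have hkey := h2 q hq1
        have hidx : n * q + 1 = m + 1 := by omega
        rw [hidx] at hkey
        have hm' : m = n * q := by omega
        have hx : 2 ≤ a (n*q) := h2a _ (by nlinarith)
        rw [hkey, hm']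
        calc 2 * a (n*q) ≤ a (n*q) * a (n*q) := Nat.mul_le_mul_right _ hx
        _ = a (n*q) ^ 2 := (sq _).symm
        _ ≤ a (n*q) ^ M q := Nat.pow_le_pow_right (by omega) (hM q)
      · -- 2 ≤ r ≤ n-1
        have hq1 : 1 ≤ q := by nlinarith
        have hkey := h3 q hq1 r hr2 (by omega)
        rw [hqr] at hkey
        have hx : 2 ≤ a (n*q+1) := h2a _ (by omega)
        rcases eq_or_lt_of_le (show 2 ≤ r by omega) with hr2' | hr3
        · -- r = 2, m = n*q+1
          have hm' : m = n * q + 1 := by omega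
          rw [hkey, hm', ← hr2']
          calc 2 * a (n*q+1) ≤ a (n*q+1) * a (n*q+1) := Nat.mul_le_mul_right _ hx
          _ = a (n*q+1) ^ 2 := (sq _).symm
        · -- r ≥ 3, m = n*q + (r-1)
          have hkey' := h3 q hq1 (r-1) (by omega) (by omega)
          have hm' : m = n * q + (r - 1) := by omega
          rw [hkey, hm', hkey']
          have : a (n*q+1) ^ r = a (n*q+1) * a (n*q+1) ^ (r-1) := by
            rw [← pow_succ']
            congr 1
            omega
          rw [this]
          exact Nat.mul_le_mul_right _ hx

theorem constr_steps (n : ℕ) (hn : 2 ≤ n) (c : ℝ) (hc : c ∈ Set.Ioo (0:ℝ) 1) (M : ℕ → ℕ)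
    (hM : ∀ k, 2 ≤ M k) (a : ℕ → ℕ) (ha : IsConstrSeq n c M a) :
    ∀ m h : ℕ, 2 ^ h * a m ≤ a (m + h) := by
  intro m h
  induction h with
  | zero => simp
  | succ h IH =>
    calc 2 ^ (h+1) * a m = 2 * (2 ^ h * a m) := by ring
    _ ≤ 2 * a (m + h) := Nat.mul_le_mul_left _ IH
    _ ≤ a (m + h + 1) := constr_growth n hn c hc M hM a ha (m + h)

theorem constr_pos (n : ℕ) (hn : 2 ≤ n) (c : ℝ) (hc : c ∈ Set.Ioo (0:ℝ) 1) (M : ℕ → ℕ)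
    (hM : ∀ k, 2 ≤ M k) (a : ℕ → ℕ) (ha : IsConstrSeq n c M a) :
    ∀ m, 0 < a m := by
  intro m
  rcases Nat.eq_zero_or_pos m with h | h
  · subst h; rw [ha.1]; norm_num
  · have := constr_two n hn c hc M hM a ha m h; omega

/-- real one-step comparison: `1/a (m+h) ≤ (1/2)^h * (1/a m)` -/
theorem constr_inv_le (n : ℕ) (hn : 2 ≤ n) (c : ℝ) (hc : c ∈ Set.Ioo (0:ℝ) 1) (M : ℕ → ℕ)
    (hM : ∀ k, 2 ≤ M k) (a : ℕ → ℕ) (ha : IsConstrSeq n c M a) (m h : ℕ) :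
    (1:ℝ) / a (m + h) ≤ (1/2) ^ h * (1 / a m) := by
  have hpos := constr_pos n hn c hc M hM a ha
  have hstep := constr_steps n hn c hc M hM a ha m h
  have h1 : (0:ℝ) < a m := by exact_mod_cast hpos m
  have h2 : (0:ℝ) < a (m + h) := by exact_mod_cast hpos (m + h)
  have h3 : ((2:ℝ) ^ h * a m) ≤ a (m + h) := by exact_mod_cast hstep
  calc (1:ℝ)/a (m+h) ≤ 1/(2^h * a m) := one_div_le_one_div_of_le (by positivity) h3
  _ = (1/2)^h * (1/a m) := by rw [div_pow, one_pow, div_mul_div_comm, one_mul]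

theorem constr_tail (n : ℕ) (hn : 2 ≤ n) (c : ℝ) (hc : c ∈ Set.Ioo (0:ℝ) 1) (M : ℕ → ℕ)
    (hM : ∀ k, 2 ≤ M k) (a : ℕ → ℕ) (ha : IsConstrSeq n c M a) (K j : ℕ) :
    (∑' h : ℕ, (1:ℝ) / a (n*(h+K)+j)) ≤ 2 * (1 / a (n*K+j)) := by
  have hpos := constr_pos n hn c hc M hM a ha
  set B := n*K+j with hB
  have hterm : ∀ h : ℕ, (1:ℝ)/a (n*(h+K)+j) ≤ (1/(a B:ℝ)) * (1/2)^h := by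
    intro h
    have hidx : n*(h+K)+j = B + n*h := by rw [hB]; ring
    rw [hidx]
    calc (1:ℝ)/a (B + n*h) ≤ (1/2)^(n*h) * (1/a B) :=
      constr_inv_le n hn c hc M hM a ha B (n*h)
    _ ≤ (1/2)^h * (1/a B) := by
        apply mul_le_mul_of_nonneg_right _ (by positivity)
        exact pow_le_pow_of_le_one (by norm_num) (by norm_num)
          (Nat.le_mul_of_pos_left h (by omega))
    _ = (1/(a B:ℝ)) * (1/2)^h := mul_comm _ _
  have hsg : Summable (fun h:ℕ => (1/(a B:ℝ)) * (1/2)^h) :=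
    (summable_geometric_of_lt_one (by norm_num) (by norm_num)).mul_left _
  have hsum := Summable.tsum_le_tsum hterm
    (Summable.of_nonneg_of_le (fun h => by positivity) hterm hsg) hsg
  rw [tsum_mul_left, tsum_geometric_of_lt_one (by norm_num) (by norm_num)] at hsum
  calc (∑' h : ℕ, (1:ℝ) / a (n*(h+K)+j)) ≤ 1/(a B:ℝ) * ((1:ℝ)-1/2)⁻¹ := hsum
  _ = 2 * (1 / a B) := by norm_num; ring

theorem constr_finsum (n : ℕ) (hn : 2 ≤ n) (c : ℝ) (hc : c ∈ Set.Ioo (0:ℝ) 1) (M : ℕ → ℕ)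
    (hM : ∀ k, 2 ≤ M k) (a : ℕ → ℕ) (ha : IsConstrSeq n c M a) (e k : ℕ) :
    (∑ m ∈ Finset.Icc (e+1) k, (1:ℝ)/a (n*m)) ≤ 2 * (1 / a (n*(e+1))) := by
  have hpos := constr_pos n hn c hc M hM a ha
  set B := n*(e+1) with hB
  have hBpos : (0:ℝ) < a B := by exact_mod_cast hpos B
  have hterm : ∀ m ∈ Finset.Icc (e+1) k, (1:ℝ)/a (n*m) ≤ (1/(a B:ℝ)) * (1/2)^(m-(e+1)) := by
    intro m hm
    rw [Finset.mem_Icc] at hm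
    have hidx : n*m = B + n*(m-(e+1)) := by
      obtain ⟨t, ht⟩ : ∃ t, m = e+1+t := ⟨m-(e+1), by omega⟩
      subst ht
      rw [hB, Nat.add_sub_cancel_left]
      ring
    rw [hidx]
    calc (1:ℝ)/a (B + n*(m-(e+1))) ≤ (1/2)^(n*(m-(e+1))) * (1/a B) :=
      constr_inv_le n hn c hc M hM a ha B _
    _ ≤ (1/2)^(m-(e+1)) * (1/a B) := by
        apply mul_le_mul_of_nonneg_right _ (by positivity)
        exact pow_le_pow_of_le_one (by norm_num) (by norm_num)
          (Nat.le_mul_of_pos_left _ (by omega))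
    _ = (1/(a B:ℝ)) * (1/2)^(m-(e+1)) := mul_comm _ _
  have hsg : Summable (fun i:ℕ => (1/(a B:ℝ)) * (1/2)^i) :=
    (summable_geometric_of_lt_one (by norm_num) (by norm_num)).mul_left _
  calc (∑ m ∈ Finset.Icc (e+1) k, (1:ℝ)/a (n*m))
      ≤ ∑ m ∈ Finset.Icc (e+1) k, (1/(a B:ℝ)) * (1/2)^(m-(e+1)) :=
        Finset.sum_le_sum hterm
  _ = ∑ i ∈ Finset.range (k+1-(e+1)), (1/(a B:ℝ)) * (1/2)^(e+1+i-(e+1)) := by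
        rw [← Finset.Ico_add_one_right_eq_Icc, Finset.sum_Ico_eq_sum_range]
  _ = ∑ i ∈ Finset.range (k+1-(e+1)), (1/(a B:ℝ)) * (1/2)^i := by
        apply Finset.sum_congr rfl
        intro i _
        have h' : e+1+i-(e+1) = i := by omega
        rw [h']
  _ ≤ ∑' i : ℕ, (1/(a B:ℝ)) * (1/2)^i :=
        Summable.sum_le_tsum _ (fun i _ => by positivity) hsg
  _ = 1/(a B:ℝ) * ((1:ℝ)-1/2)⁻¹ := by
        rw [tsum_mul_left, tsum_geometric_of_lt_one (by norm_num) (by norm_num)]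
  _ = 2 * (1 / a B) := by norm_num; ring

theorem subcase_3i_estimate (n : ℕ) (hn : 2 ≤ n) (c : ℝ) (hc : c ∈ Set.Ioo (0:ℝ) 1) (M : ℕ → ℕ)
    (hM : ∀ k, 2 ≤ M k) (a : ℕ → ℕ) (ha : IsConstrSeq n c M a) (k e : ℕ) (hk : 1 ≤ k) (he : 1 ≤ e) (hek : e < k)
    (Q : ℕ) (hQpos : 0 < Q)
    (hQle : (Q : ℝ) ≤ (a (n * k + 1) : ℝ) * (a (n * (e - 1)))
      * ∑ m ∈ Finset.Icc e k, (1 : ℝ) / (a (n * m)))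
    (hNlt : (a (n * k + 1) : ℝ) * (a (n * (e - 1)))
        * ∑ m ∈ Finset.Icc e k, (1 : ℝ) / (a (n * m))
      < 2 * (a (n * (e - 1)) : ℝ) * (a (n * k + 1)) / (a (n * e)))
    (hcond : (a (n * (e - 1)) : ℝ) ≤ (1 / 4) * Real.sqrt (a (n * e)))
    (hck : c⁻¹ * (a (n * k + 1) : ℝ) ^ n ≤ (a (n * (k + 1)) : ℝ)) :
    |(a (n * k + 1) : ℝ) * (a (n * e)) * (∑ m ∈ Finset.Icc (e + 1) k, (1 : ℝ) / (a (n * m)))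
        * (∑' h : ℕ, (1 : ℝ) / (a (n * (h + k + 1) + 1)))
      - (a (n * e) : ℝ) * (∑' h : ℕ, (1 : ℝ) / (a (n * (h + k + 1) + n)))|
      ≤ 2 * (a (n * e) : ℝ) / (a (n * (k + 1))) ∧
    2 * (a (n * e) : ℝ) / (a (n * (k + 1))) < c / (Q : ℝ) ^ n := by
  have h2a := constr_two n hn c hc M hM a ha
  have hpos := constr_pos n hn c hc M hM a ha
  have hsteps := constr_steps n hn c hc M hM a ha
  have hA1 : (0:ℝ) < a (n*k+1) := by exact_mod_cast hpos _
  have hE : (0:ℝ) < a (n*e) := by exact_mod_cast hpos _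
  have hG : (0:ℝ) < a (n*(k+1)) := by exact_mod_cast hpos _
  have hP : (0:ℝ) < a (n*(e+1)) := by exact_mod_cast hpos _
  have hQ' : (0:ℝ) < a (n*(k+1)+1) := by exact_mod_cast hpos _
  have hN' : (0:ℝ) < a (n*(k+1)+n) := by exact_mod_cast hpos _
  constructor
  · -- Part 1
    set S := (∑ m ∈ Finset.Icc (e + 1) k, (1 : ℝ) / (a (n * m))) with hSdef
    set R1 := (∑' h : ℕ, (1 : ℝ) / (a (n * (h + k + 1) + 1))) with hR1def
    set Rn := (∑' h : ℕ, (1 : ℝ) / (a (n * (h + k + 1) + n))) with hRndef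
    have hSn : 0 ≤ S := Finset.sum_nonneg (fun m _ => by positivity)
    have hR1n : 0 ≤ R1 := tsum_nonneg (fun h => by positivity)
    have hRnn : 0 ≤ Rn := tsum_nonneg (fun h => by positivity)
    have hR1e : R1 = ∑' h : ℕ, (1:ℝ) / a (n*(h+(k+1))+1) :=
      tsum_congr (fun h => by rw [add_assoc])
    have hRne : Rn = ∑' h : ℕ, (1:ℝ) / a (n*(h+(k+1))+n) :=
      tsum_congr (fun h => by rw [add_assoc])
    have hR1b : R1 ≤ 2 * (1 / a (n*(k+1)+1)) := by
      rw [hR1e]; exact constr_tail n hn c hc M hM a ha (k+1) 1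
    have hRnb : Rn ≤ 2 * (1 / a (n*(k+1)+n)) := by
      rw [hRne]; exact constr_tail n hn c hc M hM a ha (k+1) n
    have hSb : S ≤ 2 * (1 / a (n*(e+1))) := constr_finsum n hn c hc M hM a ha e k
    -- nat facts
    have hP2 : 2 ≤ a (n*(e+1)) := by
      apply h2a
      have : 0 < n*(e+1) := Nat.mul_pos (by omega) (by omega)
      omega
    have hdbl : 2 * a (n*k+1) ≤ a (n*(k+1)) := by
      have hidx : n*k+1+(n-1) = n*(k+1) := by
        have : n*(k+1) = n*k + n := by ring
        omega
      calc 2 * a (n*k+1) = 2^1 * a (n*k+1) := by ring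
      _ ≤ 2^(n-1) * a (n*k+1) := Nat.mul_le_mul_right _ (Nat.pow_le_pow_right (by omega) (by omega))
      _ ≤ a (n*k+1+(n-1)) := hsteps _ _
      _ = a (n*(k+1)) := by rw [hidx]
    have hsq : a (n*(k+1)) ^ 2 ≤ a (n*(k+1)+1) := by
      rw [ha.2.2.1 (k+1) (by omega)]
      apply Nat.pow_le_pow_right _ (hM (k+1))
      have : 0 < n*(k+1) := Nat.mul_pos (by omega) (by omega)
      have := h2a (n*(k+1)) (by omega)
      omega
    have key1 : a (n*(k+1)) * (2 * a (n*k+1)) ≤ a (n*(k+1)+1) := by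
      calc a (n*(k+1)) * (2 * a (n*k+1)) ≤ a (n*(k+1)) * a (n*(k+1)) :=
        Nat.mul_le_mul_left _ hdbl
      _ = a (n*(k+1)) ^ 2 := (sq _).symm
      _ ≤ a (n*(k+1)+1) := hsq
    have key2 : 2 * a (n*(k+1)) ≤ a (n*(k+1)+n) := by
      calc 2 * a (n*(k+1)) = 2^1 * a (n*(k+1)) := by ring
      _ ≤ 2^n * a (n*(k+1)) := Nat.mul_le_mul_right _ (Nat.pow_le_pow_right (by omega) (by omega))
      _ ≤ a (n*(k+1)+n) := hsteps _ _
    -- X bound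
    have hX : (a (n*k+1):ℝ) * (a (n*e)) * S * R1 ≤ (a (n*e):ℝ) / (a (n*(k+1))) := by
      have hXa : (a (n*k+1):ℝ) * (a (n*e)) * S * R1
          ≤ (a (n*k+1):ℝ) * (a (n*e)) * (2 * (1/a (n*(e+1)))) * (2 * (1/a (n*(k+1)+1))) := by
        gcongr
      have keyR : (4:ℝ) * a (n*k+1) * a (n*(k+1)) ≤ (a (n*(e+1)):ℝ) * a (n*(k+1)+1) := by
        have h := Nat.mul_le_mul hP2 key1
        have h' : (2:ℝ) * ((a (n*(k+1)):ℝ) * (2 * a (n*k+1))) ≤ (a (n*(e+1)):ℝ) * a (n*(k+1)+1) := by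
          exact_mod_cast h
        linarith [h']
      have hXb : (a (n*k+1):ℝ) * (a (n*e)) * (2 * (1/a (n*(e+1)))) * (2 * (1/a (n*(k+1)+1)))
          ≤ (a (n*e):ℝ) / (a (n*(k+1))) := by
        have heq : (a (n*k+1):ℝ) * (a (n*e)) * (2 * (1/a (n*(e+1)))) * (2 * (1/a (n*(k+1)+1)))
            = (4 * a (n*k+1) * a (n*e)) / ((a (n*(e+1)):ℝ) * a (n*(k+1)+1)) := by
          field_simp; ring
        rw [heq, div_le_div_iff₀ (by positivity) hG]
        calc (4:ℝ) * a (n*k+1) * a (n*e) * a (n*(k+1))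
            = (a (n*e):ℝ) * (4 * a (n*k+1) * a (n*(k+1))) := by ring
        _ ≤ (a (n*e):ℝ) * ((a (n*(e+1)):ℝ) * a (n*(k+1)+1)) :=
            mul_le_mul_of_nonneg_left keyR hE.le
      linarith
    -- Y bound
    have hY : (a (n*e):ℝ) * Rn ≤ (a (n*e):ℝ) / (a (n*(k+1))) := by
      have h2N : 2 * ((1:ℝ)/a (n*(k+1)+n)) ≤ 1/(a (n*(k+1)):ℝ) := by
        rw [mul_one_div, div_le_div_iff₀ hN' hG]
        have : (2:ℝ) * a (n*(k+1)) ≤ a (n*(k+1)+n) := by exact_mod_cast key2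
        linarith
      calc (a (n*e):ℝ) * Rn ≤ (a (n*e):ℝ) * (2 * (1/a (n*(k+1)+n))) := by gcongr
      _ ≤ (a (n*e):ℝ) * (1/(a (n*(k+1)):ℝ)) := mul_le_mul_of_nonneg_left h2N hE.le
      _ = (a (n*e):ℝ) / (a (n*(k+1))) := by ring
    have hXn : 0 ≤ (a (n*k+1):ℝ) * (a (n*e)) * S * R1 := by
      apply mul_nonneg (mul_nonneg (by positivity) hSn) hR1n
    have hYn : 0 ≤ (a (n*e):ℝ) * Rn := mul_nonneg hE.le hRnn
    have h2EG : 2 * (a (n*e):ℝ) / (a (n*(k+1))) = 2 * ((a (n*e):ℝ) / (a (n*(k+1)))) := by ring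
    rw [abs_sub_le_iff]
    constructor <;> linarith [div_nonneg hE.le hG.le]
  · -- Part 2
    have hQR : (0:ℝ) < (Q:ℝ) := by exact_mod_cast hQpos
    have hE2 : (2:ℝ) ≤ a (n*e) := by
      have : 0 < n*e := Nat.mul_pos (by omega) (by omega)
      exact_mod_cast h2a (n*e) (by omega)
    have hsE : (0:ℝ) < Real.sqrt (a (n*e)) := Real.sqrt_pos.mpr hE
    have hsE1 : (1:ℝ) ≤ Real.sqrt (a (n*e)) := Real.one_le_sqrt.mpr (by linarith)
    have hmul : Real.sqrt (a (n*e)) * Real.sqrt (a (n*e)) = (a (n*e):ℝ) :=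
      Real.mul_self_sqrt hE.le
    have hQ2 : (Q : ℝ) < 2 * (a (n*(e-1)):ℝ) * (a (n*k+1)) / (a (n*e)) :=
      lt_of_le_of_lt hQle hNlt
    have hsde : Real.sqrt (a (n*e)) / (a (n*e):ℝ) = 1 / Real.sqrt (a (n*e)) := by
      rw [eq_div_iff (ne_of_gt hsE), div_mul_eq_mul_div, hmul, div_self (ne_of_gt hE)]
    have hQ3 : (Q : ℝ) < (1/2) * (a (n*k+1):ℝ) / Real.sqrt (a (n*e)) := by
      have step1 : 2 * (a (n*(e-1)):ℝ) * (a (n*k+1)) / (a (n*e))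
          ≤ 2 * ((1/4) * Real.sqrt (a (n*e))) * (a (n*k+1)) / (a (n*e)) := by gcongr
      have step2 : 2 * ((1/4) * Real.sqrt (a (n*e))) * (a (n*k+1):ℝ) / (a (n*e))
          = (1/2) * (a (n*k+1):ℝ) / Real.sqrt (a (n*e)) := by
        calc 2 * ((1/4) * Real.sqrt (a (n*e))) * (a (n*k+1):ℝ) / (a (n*e))
            = (1/2) * (a (n*k+1):ℝ) * (Real.sqrt (a (n*e)) / (a (n*e))) := by ring
        _ = (1/2) * (a (n*k+1):ℝ) * (1 / Real.sqrt (a (n*e))) := by rw [hsde]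
        _ = (1/2) * (a (n*k+1):ℝ) / Real.sqrt (a (n*e)) := by ring
      linarith
    have hQn : (Q:ℝ)^n < ((1/2) * (a (n*k+1):ℝ) / Real.sqrt (a (n*e)))^n :=
      pow_lt_pow_left₀ hQ3 (Nat.cast_nonneg Q) (by omega)
    have hEpow : (a (n*e):ℝ) ≤ Real.sqrt (a (n*e)) ^ n := by
      calc (a (n*e):ℝ) = Real.sqrt (a (n*e)) ^ 2 := by rw [sq, hmul]
      _ ≤ Real.sqrt (a (n*e)) ^ n := pow_le_pow_right₀ hsE1 hn
    have hkey : 2 * (a (n*e):ℝ) * (Q:ℝ)^n < (a (n*k+1):ℝ)^n := by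
      have hhalf : ((1:ℝ)/2)^n ≤ 1/4 := by
        calc ((1:ℝ)/2)^n ≤ ((1:ℝ)/2)^2 := pow_le_pow_of_le_one (by norm_num) (by norm_num) hn
        _ = 1/4 := by norm_num
      calc 2 * (a (n*e):ℝ) * (Q:ℝ)^n
          < 2 * (a (n*e):ℝ) * ((1/2) * (a (n*k+1):ℝ) / Real.sqrt (a (n*e)))^n := by
            apply mul_lt_mul_of_pos_left hQn (by positivity)
      _ = 2 * ((1:ℝ)/2)^n * (a (n*k+1):ℝ)^n * ((a (n*e):ℝ) / Real.sqrt (a (n*e)) ^ n) := by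
            rw [div_pow, mul_pow]; ring
      _ ≤ 2 * ((1:ℝ)/2)^n * (a (n*k+1):ℝ)^n * 1 := by
            apply mul_le_mul_of_nonneg_left _ (by positivity)
            rw [div_le_one (by positivity)]
            exact hEpow
      _ ≤ (1/2) * (a (n*k+1):ℝ)^n := by
            linarith [mul_le_mul_of_nonneg_right hhalf (pow_nonneg hA1.le n)]
      _ < (a (n*k+1):ℝ)^n := by linarith [pow_pos hA1 n]
    have hcG : (a (n*k+1):ℝ)^n ≤ c * (a (n*(k+1)):ℝ) := by
      have h := mul_le_mul_of_nonneg_left hck hc.1.le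
      rwa [← mul_assoc, mul_inv_cancel₀ (ne_of_gt hc.1), one_mul] at h
    rw [div_lt_div_iff₀ hG (pow_pos hQR n)]
    linarith
end
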